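/- Let F be a field of characteristic 0 and let Γ_n(UT_2) denote the space of multilinear proper polynomials of degree n modulo the polynomial identities of UT_2(F). For n ≥ 2, the left-normed commutators [x_{σ(1)}, x_{σ(2)}, x_3, ..., x_n] where σ ranges over orderings with first index greater than second and remaining indices increasing — i.e. the commutators [x_{i_1}, x_{i_2}, ..., x_{i_n}] with i_1 > i_2 < i_3 < ... < i_n — form a linearly independent set of size n-1 in UT_2-valued multilinear functions; equivalently, the dimension of the proper multilinear component of the relatively free algebra of UT_2(F) in degree n is n - 1. -/

import Mathlib

/-- Left-normed iterated commutator `[a, l₁, l₂, …]` with `[a,b] = ab - ba`. -/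
def lcomm16 {A : Type*} [Ring A] (a : A) (l : List A) : A :=
  l.foldl (fun u v => u * v - v * u) a

/-!
A linear combination of the commutators that vanishes on `UT₂(F)` vanishes in particular at
the test point `x_v = e₁₂`, `x_j = e₂₂` for `j ≠ v`. There every commutator `[x_w, x_0, …]`
with `w ≠ v` starts with `[e₂₂, e₂₂] = 0`, while `[e₁₂, e₂₂] = e₁₂` is fixed by further
bracketing with `e₂₂`; so the combination evaluates to `c_v • e₁₂`, whose `(0, 1)` entry is `c_v`.
-/

section Commutator

variable {A : Type*} [Ring A]

lemma lcomm16_cons (a b : A) (l : List A) : lcomm16 a (b :: l) = lcomm16 (a * b - b * a) l :=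
  rfl

lemma lcomm16_zero_left (l : List A) : lcomm16 0 l = 0 := by
  induction l with
  | nil => rfl
  | cons b l ih => rw [lcomm16_cons, zero_mul, mul_zero, sub_zero, ih]

lemma lcomm16_of_forall_eq {a d : A} (had : a * d - d * a = a) {l : List A}
    (hl : ∀ b ∈ l, b = d) : lcomm16 a l = a := by
  induction l with
  | nil => rfl
  | cons b l ih =>
    rw [lcomm16_cons, hl b List.mem_cons_self, had]
    exact ih fun b' hb' => hl b' (List.mem_cons_of_mem b hb')

lemma sum_smul_lcomm16_eq_smul {R : Type*} [Semiring R] [Module R A] {n : ℕ} (c : Fin n → R)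
    {a d : A} (had : a * d - d * a = a) {x : Fin n → A} {v i0 : Fin n} (hv : v ≠ i0)
    (hxv : x v = a) (hxd : ∀ w, w ≠ v → x w = d) :
    ∑ w ∈ Finset.univ.filter (fun w : Fin n => w ≠ i0),
      c w • lcomm16 (x w * x i0 - x i0 * x w)
        (((List.finRange n).filter (fun j => !(j == w || j == i0))).map x) = c v • a := by
  have hx0 : x i0 = d := hxd i0 hv.symm
  rw [Finset.sum_eq_single_of_mem v (Finset.mem_filter.mpr ⟨Finset.mem_univ v, hv⟩)]
  · congr 1
    rw [hxv, hx0, had]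
    refine lcomm16_of_forall_eq had fun b hb => ?_
    obtain ⟨j, hj, rfl⟩ := List.mem_map.mp hb
    have hjv : j ≠ v := by
      rintro rfl
      simp at hj
    exact hxd j hjv
  · intro w _ hwv
    rw [hxd w hwv, hx0, sub_self, lcomm16_zero_left, smul_zero]

end Commutator

lemma isUpperTriangular_fin_two {R : Type*} [Zero R] (a b d : R) : (!![a, b; 0, d]).IsUpperTriangular := by
  intro i j hij
  fin_cases i <;> fin_cases j <;> simp_all

lemma commutator_e12_e22 {R : Type*} [Ring R] :
    !![0, 1; 0, 0] * !![0, 0; 0, 1] - !![0, 0; 0, 1] * !![0, 1; 0, 0] =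
      (!![0, 1; 0, 0] : Matrix (Fin 2) (Fin 2) R) := by
  simp

/-- For `n ≥ 2`, the `n - 1` semistandard left-normed commutators
`[x_v, x_0, x_{j₁}, …]` (`v ≠ 0`, remaining indices in increasing order), viewed as
multilinear functions on upper-triangular `2×2` matrices, are linearly independent;
the proper multilinear component of the relatively free algebra of `UT₂(F)` in degree `n`
has dimension `n - 1`. -/
theorem stmt16 (F : Type) [Field F] (n : ℕ) (hn : 2 ≤ n) :
    let i0 : Fin n := ⟨0, by omega⟩
    (Finset.univ.filter (fun v : Fin n => v ≠ i0)).card = n - 1 ∧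
    ∀ c : Fin n → F,
      (∀ x : Fin n → Matrix (Fin 2) (Fin 2) F,
          (∀ i : Fin n, ∀ p q : Fin 2, q < p → x i p q = 0) →
          ∑ v ∈ Finset.univ.filter (fun v : Fin n => v ≠ i0),
            c v • lcomm16 (x v * x i0 - x i0 * x v)
              (((List.finRange n).filter (fun j => !(j == v || j == i0))).map x) = 0) →
      ∀ v : Fin n, v ≠ i0 → c v = 0 := by
  intro i0
  refine ⟨by simp [Finset.filter_ne'], fun c hc v hv => ?_⟩
  let x : Fin n → Matrix (Fin 2) (Fin 2) F :=
    Function.update (fun _ => !![0, 0; 0, 1]) v !![0, 1; 0, 0]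
  have hxv : x v = !![0, 1; 0, 0] := Function.update_self ..
  have hxd (w : Fin n) (hw : w ≠ v) : x w = !![0, 0; 0, 1] := Function.update_of_ne hw ..
  have hx_upper (i : Fin n) : (x i).IsUpperTriangular := by
    rcases eq_or_ne i v with rfl | hiv
    · rw [hxv]; exact isUpperTriangular_fin_two _ _ _
    · rw [hxd i hiv]; exact isUpperTriangular_fin_two _ _ _
  have hsum := hc x fun i _ _ hqp => hx_upper i hqp
  rw [sum_smul_lcomm16_eq_smul c commutator_e12_e22 hv hxv hxd] at hsum
  simpa using congrFun₂ hsum 0 1
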